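/- Let α ∈ (0,1), let f : [0,1] × [0,1] → ℝ be continuous, let φ ∈ C¹([0,1]), ψ₁ ∈ C¹([0,1]), ψ₂ ∈ C([0,1]), and let u : [0,1] × [0,1] → ℝ be three times continuously differentiable and satisfy the time-fractional Benjamin–Bona–Mahony–Burgers equation C D^α_t u(x,t) − ∂ₜ∂ₓ∂ₓu(x,t) + ∂ₓu(x,t) + u(x,t)·∂ₓu(x,t) = f(x,t) for all (x,t) ∈ (0,1) × (0,1], together with u(x,0) = φ(x), u(0,t) = ψ₁(t), u(1,t) = ψ₂(t). Then v(x,t) = ∂ₜ∂ₓu(x,t) satisfies, for all (x,t) ∈ (0,1) × (0,1], the transformed fractional partial-integro differential equation ∫₀ˣ I^{1−α}[v(ξ,·)](t) dξ − ∂ₓv(x,t) + ( ∫₀ᵗ v(x,τ) dτ + φ′(x) ) · ( 1 + φ(x) − φ(0) + ψ₁(t) + ∫₀ᵗ ∫₀ˣ v(ξ,τ) dξ dτ ) = f(x,t) − C D^α ψ₁(t). -/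

import Mathlib

/-!
Write `v = ∂ₜ∂ₓu`. Since `u` is `C³`, the mixed partials of `u` and of `∂ₓu` commute, and the
fundamental theorem of calculus in each variable gives `∫₀ᵗ v(x,τ) dτ + φ′(x) = ∂ₓu(x,t)`,
`1 + φ(x) − φ(0) + ψ₁(t) + ∫₀ᵗ∫₀ˣ v = 1 + u(x,t)` and `∂ₓv = ∂ₜ∂ₓ∂ₓu`. Exchanging the order of
integration against the kernel `(t − τ)^(−α)`, integrable for `α < 1`, gives
`∫₀ˣ I^{1−α}[v(ξ,·)](t) dξ = C D^α u(x,·)(t) − C D^α ψ₁(t)`. Substituting these identities into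
the equation for `u` yields the equation for `v`.
-/

open Set Real MeasureTheory Function

theorem intervalIntegral_integral_swap_mul {K : ℝ → ℝ} {g : ℝ → ℝ → ℝ} {a b c d : ℝ}
    (hg : Continuous (uncurry g)) (hK : IntervalIntegrable K volume c d) (hab : a ≤ b)
    (hcd : c ≤ d) :
    ∫ ξ in a..b, ∫ τ in c..d, K τ * g ξ τ = ∫ τ in c..d, ∫ ξ in a..b, K τ * g ξ τ := by
  simp_rw [intervalIntegral.integral_of_le hab, intervalIntegral.integral_of_le hcd]
  obtain ⟨C, hC⟩ := (isCompact_Icc.prod isCompact_Icc).exists_bound_of_continuousOn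
    (s := Icc a b ×ˢ Icc c d) hg.continuousOn
  have hbound : ∀ᵐ p ∂(volume.restrict (Ioc a b)).prod (volume.restrict (Ioc c d)),
      ‖uncurry g p‖ ≤ C := by
    rw [Measure.prod_restrict]
    filter_upwards [ae_restrict_mem (measurableSet_Ioc.prod measurableSet_Ioc)] with p hp
    exact hC p ⟨Ioc_subset_Icc_self hp.1, Ioc_subset_Icc_self hp.2⟩
  exact integral_integral_swap ((hK.1.comp_snd _).mul_bdd hg.aestronglyMeasurable hbound)

noncomputable def partialFst (u : ℝ → ℝ → ℝ) (x t : ℝ) : ℝ := deriv (fun y => u y t) x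

noncomputable def partialSnd (u : ℝ → ℝ → ℝ) (x t : ℝ) : ℝ := deriv (u x) t

section Partial

variable {u : ℝ → ℝ → ℝ}

theorem partialFst_eq_fderiv {x t : ℝ} (h : DifferentiableAt ℝ (uncurry u) (x, t)) :
    partialFst u x t = fderiv ℝ (uncurry u) (x, t) (1, 0) := by
  have hl : HasDerivAt (fun y : ℝ => (y, t)) (1, 0) x :=
    (hasDerivAt_id x).prodMk (hasDerivAt_const x t)
  exact (h.hasFDerivAt.comp_hasDerivAt x hl).deriv

theorem partialSnd_eq_fderiv {x t : ℝ} (h : DifferentiableAt ℝ (uncurry u) (x, t)) :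
    partialSnd u x t = fderiv ℝ (uncurry u) (x, t) (0, 1) := by
  have hl : HasDerivAt (fun s : ℝ => (x, s)) (0, 1) t :=
    (hasDerivAt_const t x).prodMk (hasDerivAt_id t)
  exact (h.hasFDerivAt.comp_hasDerivAt t hl).deriv

theorem ContDiff.uncurry_partialFst {m n : WithTop ℕ∞} (h : ContDiff ℝ n (uncurry u))
    (hmn : m + 1 ≤ n) : ContDiff ℝ m (uncurry (partialFst u)) := by
  have hd : Differentiable ℝ (uncurry u) := h.differentiable (by rintro rfl; simp at hmn)
  have : uncurry (partialFst u) = fun p => fderiv ℝ (uncurry u) p (1, 0) :=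
    funext fun p => partialFst_eq_fderiv (hd p)
  rw [this]
  exact (h.fderiv_right hmn).clm_apply contDiff_const

theorem ContDiff.uncurry_partialSnd {m n : WithTop ℕ∞} (h : ContDiff ℝ n (uncurry u))
    (hmn : m + 1 ≤ n) : ContDiff ℝ m (uncurry (partialSnd u)) := by
  have hd : Differentiable ℝ (uncurry u) := h.differentiable (by rintro rfl; simp at hmn)
  have : uncurry (partialSnd u) = fun p => fderiv ℝ (uncurry u) p (0, 1) :=
    funext fun p => partialSnd_eq_fderiv (hd p)
  rw [this]
  exact (h.fderiv_right hmn).clm_apply contDiff_const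

theorem integral_partialFst (h : ContDiff ℝ 1 (uncurry u)) (a b t : ℝ) :
    ∫ ξ in a..b, partialFst u ξ t = u b t - u a t := by
  refine intervalIntegral.integral_deriv_eq_sub (fun ξ _ => ?_) ?_
  · exact (h.differentiable one_ne_zero).comp
      (differentiable_id.prodMk (differentiable_const t)) ξ
  · exact ((h.uncurry_partialFst (m := 0) le_rfl).continuous.uncurry_right t).intervalIntegrable
      a b

theorem integral_partialSnd (h : ContDiff ℝ 1 (uncurry u)) (x a b : ℝ) :
    ∫ τ in a..b, partialSnd u x τ = u x b - u x a := by
  refine intervalIntegral.integral_deriv_eq_sub (fun τ _ => ?_) ?_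
  · exact (h.differentiable one_ne_zero).comp
      ((differentiable_const x).prodMk differentiable_id) τ
  · exact ((h.uncurry_partialSnd (m := 0) le_rfl).continuous.uncurry_left x).intervalIntegrable
      a b

theorem partialSnd_partialFst (h : ContDiff ℝ 2 (uncurry u)) :
    partialSnd (partialFst u) = partialFst (partialSnd u) := by
  set U := uncurry u
  have hd : Differentiable ℝ U := h.differentiable two_ne_zero
  have hd2 : Differentiable ℝ (fderiv ℝ U) :=
    (h.fderiv_right (m := 1) le_rfl).differentiable one_ne_zero
  have hessian (v w p : ℝ × ℝ) :
      fderiv ℝ (fun q => fderiv ℝ U q v) p w = fderiv ℝ (fderiv ℝ U) p w v := by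
    rw [fderiv_clm_apply (hd2 p) (differentiableAt_const v)]
    simp
  have hdv (v : ℝ × ℝ) : Differentiable ℝ (fun q => fderiv ℝ U q v) :=
    hd2.clm_apply (differentiable_const v)
  have e1 : partialFst u = curry fun q => fderiv ℝ U q (1, 0) :=
    funext₂ fun x t => partialFst_eq_fderiv (hd _)
  have e2 : partialSnd u = curry fun q => fderiv ℝ U q (0, 1) :=
    funext₂ fun x t => partialSnd_eq_fderiv (hd _)
  funext x t
  rw [e1, e2, partialSnd_eq_fderiv (hdv _ _), partialFst_eq_fderiv (hdv _ _), uncurry_curry,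
    uncurry_curry, hessian, hessian]
  exact (h.contDiffAt.isSymmSndFDerivAt (by simp [minSmoothness_of_isRCLikeNormedField])).eq _ _

theorem integral_integral_partialSnd_partialFst (h : ContDiff ℝ 2 (uncurry u)) (a b c d : ℝ) :
    ∫ τ in c..d, ∫ ξ in a..b, partialSnd (partialFst u) ξ τ
      = u b d - u b c - (u a d - u a c) := by
  have h₁ : ContDiff ℝ 1 (uncurry (partialSnd u)) := h.uncurry_partialSnd (by norm_num)
  have h₀ : ContDiff ℝ 1 (uncurry u) := h.of_le (by norm_num)
  simp_rw [partialSnd_partialFst h, integral_partialFst h₁]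
  rw [intervalIntegral.integral_sub ((h₁.continuous.uncurry_left b).intervalIntegrable c d)
      ((h₁.continuous.uncurry_left a).intervalIntegrable c d),
    integral_partialSnd h₀, integral_partialSnd h₀]

theorem integral_integral_mul_partialSnd_partialFst (h : ContDiff ℝ 2 (uncurry u))
    {K : ℝ → ℝ} {a b c d : ℝ} (hK : IntervalIntegrable K volume c d) (hab : a ≤ b)
    (hcd : c ≤ d) :
    ∫ ξ in a..b, ∫ τ in c..d, K τ * partialSnd (partialFst u) ξ τ
      = (∫ τ in c..d, K τ * partialSnd u b τ) - ∫ τ in c..d, K τ * partialSnd u a τ := by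
  have h₁ : ContDiff ℝ 1 (uncurry (partialSnd u)) := h.uncurry_partialSnd (by norm_num)
  have hK' (x : ℝ) : IntervalIntegrable (fun τ => K τ * partialSnd u x τ) volume c d :=
    hK.mul_continuousOn (h₁.continuous.uncurry_left x).continuousOn
  have hcont : Continuous (uncurry (partialSnd (partialFst u))) :=
    ((h.uncurry_partialFst (m := 1) (by norm_num)).uncurry_partialSnd (m := 0) le_rfl).continuous
  rw [intervalIntegral_integral_swap_mul hcont hK hab hcd,
    ← intervalIntegral.integral_sub (hK' b) (hK' a)]
  refine intervalIntegral.integral_congr fun τ _ => ?_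
  simp only [partialSnd_partialFst h, intervalIntegral.integral_const_mul, integral_partialFst h₁,
    mul_sub]

end Partial

noncomputable def caputoDeriv (α : ℝ) (g : ℝ → ℝ) (t : ℝ) : ℝ :=
  1 / Gamma (1 - α) * ∫ τ in (0:ℝ)..t, (t - τ) ^ (-α) * deriv g τ

theorem caputoDeriv_congr {α t : ℝ} {g h : ℝ → ℝ} (ht : 0 ≤ t) (hgh : EqOn g h (Ioo 0 t)) :
    caputoDeriv α g t = caputoDeriv α h t := by
  unfold caputoDeriv
  simp_rw [intervalIntegral.integral_of_le ht, integral_Ioc_eq_integral_Ioo]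
  congr 1
  refine setIntegral_congr_fun measurableSet_Ioo fun τ hτ => ?_
  rw [(hgh.eventuallyEq_of_mem (isOpen_Ioo.mem_nhds hτ)).deriv_eq]

theorem intervalIntegrable_sub_rpow_neg {α : ℝ} (hα : α < 1) (t : ℝ) :
    IntervalIntegrable (fun τ => (t - τ) ^ (-α)) volume 0 t := by
  simpa using ((intervalIntegral.intervalIntegrable_rpow' (r := -α) (a := 0) (b := t)
    (by linarith)).comp_sub_left t).symm

theorem integral_integral_caputo_partialSnd_partialFst {u : ℝ → ℝ → ℝ}
    (h : ContDiff ℝ 2 (uncurry u)) {α a x t : ℝ} (hα : α < 1) (hax : a ≤ x) (ht : 0 ≤ t) :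
    ∫ ξ in a..x, 1 / Gamma (1 - α) *
        ∫ τ in (0:ℝ)..t, (t - τ) ^ (-α) * partialSnd (partialFst u) ξ τ
      = caputoDeriv α (u x) t - caputoDeriv α (u a) t := by
  rw [intervalIntegral.integral_const_mul,
    integral_integral_mul_partialSnd_partialFst h (intervalIntegrable_sub_rpow_neg hα t) hax ht,
    mul_sub]
  rfl

theorem statement6_general
    (α : ℝ) (hα : α ∈ Ioo (0:ℝ) 1)
    (f : ℝ → ℝ → ℝ) (φ ψ₁ : ℝ → ℝ) (u v : ℝ → ℝ → ℝ)
    (hu : ContDiff ℝ 3 (fun p : ℝ × ℝ => u p.1 p.2))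
    (hpde : ∀ x ∈ Ioo (0:ℝ) 1, ∀ t ∈ Ioc (0:ℝ) 1,
      (1 / Real.Gamma (1 - α)) * (∫ τ in (0:ℝ)..t, (t - τ) ^ (-α) * deriv (fun s => u x s) τ)
        - deriv (fun s => deriv (fun y => deriv (fun z => u z s) y) x) t
        + deriv (fun y => u y t) x
        + u x t * deriv (fun y => u y t) x = f x t)
    (hic : ∀ x ∈ Icc (0:ℝ) 1, u x 0 = φ x)
    (hbc1 : ∀ t ∈ Icc (0:ℝ) 1, u 0 t = ψ₁ t)
    (hv : ∀ x t, v x t = deriv (fun s => deriv (fun y => u y s) x) t) :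
    ∀ x ∈ Ioo (0:ℝ) 1, ∀ t ∈ Ioc (0:ℝ) 1,
      (∫ ξ in (0:ℝ)..x, (1 / Real.Gamma (1 - α)) * ∫ τ in (0:ℝ)..t, (t - τ) ^ (-α) * v ξ τ)
        - deriv (fun y => v y t) x
        + ((∫ τ in (0:ℝ)..t, v x τ) + deriv φ x)
            * (1 + φ x - φ 0 + ψ₁ t + ∫ τ in (0:ℝ)..t, ∫ ξ in (0:ℝ)..x, v ξ τ)
        = f x t - (1 / Real.Gamma (1 - α)) * ∫ τ in (0:ℝ)..t, (t - τ) ^ (-α) * deriv ψ₁ τ := by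
  intro x hx t ht
  obtain rfl : v = partialSnd (partialFst u) := funext₂ hv
  have hu2 : ContDiff ℝ 2 (uncurry u) := hu.of_le (by norm_num)
  have hφ : deriv φ x = partialFst u x 0 := by
    have h : EqOn (u · 0) φ (Ioo 0 1) := fun y hy => hic y (Ioo_subset_Icc_self hy)
    exact ((h.eventuallyEq_of_mem (isOpen_Ioo.mem_nhds hx)).deriv_eq).symm
  have hA : ∫ ξ in (0:ℝ)..x, 1 / Gamma (1 - α) *
        ∫ τ in (0:ℝ)..t, (t - τ) ^ (-α) * partialSnd (partialFst u) ξ τ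
      = caputoDeriv α (u x) t - caputoDeriv α ψ₁ t := by
    rw [integral_integral_caputo_partialSnd_partialFst hu2 hα.2 hx.1.le ht.1.le,
      caputoDeriv_congr ht.1.le fun s hs => hbc1 s ⟨hs.1.le, hs.2.le.trans ht.2⟩]
  have hB : deriv (fun y => partialSnd (partialFst u) y t) x
      = partialSnd (partialFst (partialFst u)) x t :=
    (congrFun₂ (partialSnd_partialFst (hu.uncurry_partialFst (by norm_num))) x t).symm
  have hC : (∫ τ in (0:ℝ)..t, partialSnd (partialFst u) x τ) + deriv φ x
      = partialFst u x t := by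
    rw [integral_partialSnd (hu.uncurry_partialFst (by norm_num)), hφ]
    ring
  have hD : 1 + φ x - φ 0 + ψ₁ t
        + ∫ τ in (0:ℝ)..t, ∫ ξ in (0:ℝ)..x, partialSnd (partialFst u) ξ τ = 1 + u x t := by
    rw [integral_integral_partialSnd_partialFst hu2, ← hic x (Ioo_subset_Icc_self hx),
      ← hic 0 (left_mem_Icc.2 zero_le_one), ← hbc1 t (Ioc_subset_Icc_self ht)]
    ring
  have hpde' : caputoDeriv α (u x) t - partialSnd (partialFst (partialFst u)) x t
      + partialFst u x t + u x t * partialFst u x t = f x t := hpde x hx t ht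
  show _ = f x t - caputoDeriv α ψ₁ t
  rw [hA, hB, hC, hD]
  linear_combination hpde'

/-- If a C³ function `u` solves the time-fractional
Benjamin–Bona–Mahony–Burgers equation
`C D^α_t u − ∂ₜ∂ₓ∂ₓ u + ∂ₓ u + u ∂ₓ u = f` on `(0,1) × (0,1]` with data
`u x 0 = φ x`, `u 0 t = ψ₁ t`, `u 1 t = ψ₂ t`, then `v = ∂ₜ∂ₓ u` solves the
transformed fractional partial-integro differential equation. -/
theorem statement6
    (α : ℝ) (hα : α ∈ Ioo (0:ℝ) 1)
    (f : ℝ → ℝ → ℝ) (φ ψ₁ ψ₂ : ℝ → ℝ) (u v : ℝ → ℝ → ℝ)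
    (hf : ContinuousOn (fun p : ℝ × ℝ => f p.1 p.2) (Icc 0 1 ×ˢ Icc 0 1))
    (hφ : ContDiff ℝ 1 φ) (hψ₁ : ContDiff ℝ 1 ψ₁)
    (hψ₂ : ContinuousOn ψ₂ (Icc 0 1))
    (hu : ContDiff ℝ 3 (fun p : ℝ × ℝ => u p.1 p.2))
    (hpde : ∀ x ∈ Ioo (0:ℝ) 1, ∀ t ∈ Ioc (0:ℝ) 1,
      (1 / Real.Gamma (1 - α)) * (∫ τ in (0:ℝ)..t, (t - τ) ^ (-α) * deriv (fun s => u x s) τ)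
        - deriv (fun s => deriv (fun y => deriv (fun z => u z s) y) x) t
        + deriv (fun y => u y t) x
        + u x t * deriv (fun y => u y t) x = f x t)
    (hic : ∀ x ∈ Icc (0:ℝ) 1, u x 0 = φ x)
    (hbc1 : ∀ t ∈ Icc (0:ℝ) 1, u 0 t = ψ₁ t)
    (hbc2 : ∀ t ∈ Icc (0:ℝ) 1, u 1 t = ψ₂ t)
    (hv : ∀ x t, v x t = deriv (fun s => deriv (fun y => u y s) x) t) :
    ∀ x ∈ Ioo (0:ℝ) 1, ∀ t ∈ Ioc (0:ℝ) 1,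
      (∫ ξ in (0:ℝ)..x, (1 / Real.Gamma (1 - α)) * ∫ τ in (0:ℝ)..t, (t - τ) ^ (-α) * v ξ τ)
        - deriv (fun y => v y t) x
        + ((∫ τ in (0:ℝ)..t, v x τ) + deriv φ x)
            * (1 + φ x - φ 0 + ψ₁ t + ∫ τ in (0:ℝ)..t, ∫ ξ in (0:ℝ)..x, v ξ τ)
        = f x t - (1 / Real.Gamma (1 - α)) * ∫ τ in (0:ℝ)..t, (t - τ) ^ (-α) * deriv ψ₁ τ :=
  statement6_general α hα f φ ψ₁ u v hu hpde hic hbc1 hv
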